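/- Let L be a GO-space. If the operation of inversion f ↦ f⁻¹ is continuous on M_p(L), then for every x ∈ L that is isolated from at least one side and every y ∈ L, the set W(x;{y}) = {f ∈ M(L) : f(x) = y} is open in M_p(L). -/

import Mathlib

open Set Topology TopologicalSpace Filter

variable (L : Type*) [LinearOrder L] [TopologicalSpace L]

/-- The set `M(L)` of monotonic autohomeomorphisms of `L`: homeomorphisms `L → L` that are
either strictly increasing or strictly decreasing. -/
abbrev MonoHomeo := {f : L ≃ₜ L // StrictMono f ∨ StrictAnti f}

namespace MonoHomeo

variable {L}

/-- The topology of pointwise convergence on `M(L)`, giving `M_p(L)`: the topology induced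
from the product topology on `L → L` via the underlying-function map. -/
instance : TopologicalSpace (MonoHomeo L) :=
  TopologicalSpace.induced (fun f => ((f.1 : L ≃ₜ L) : L → L)) Pi.topologicalSpace

theorem symm_strictMono {e : L ≃ₜ L} (h : StrictMono e) : StrictMono (e.symm : L → L) := by
  intro a b hab
  rw [← e.apply_symm_apply a, ← e.apply_symm_apply b] at hab
  exact h.lt_iff_lt.mp hab

theorem symm_strictAnti {e : L ≃ₜ L} (h : StrictAnti e) : StrictAnti (e.symm : L → L) := by
  intro a b hab
  rw [← e.apply_symm_apply a, ← e.apply_symm_apply b] at hab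
  by_contra hc
  exact absurd hab (not_lt.mpr (h.antitone (not_lt.mp hc)))

/-- Composition in `M(L)`: `f * g = f ∘ g`. -/
instance : Mul (MonoHomeo L) :=
  ⟨fun f g => ⟨g.1.trans f.1, by
    rcases f.2 with hf | hf <;> rcases g.2 with hg | hg
    · exact Or.inl (hf.comp hg)
    · exact Or.inr (hf.comp_strictAnti hg)
    · exact Or.inr (hf.comp_strictMono hg)
    · exact Or.inl (hf.comp hg)⟩⟩

instance : One (MonoHomeo L) := ⟨⟨Homeomorph.refl L, Or.inl strictMono_id⟩⟩

/-- Inversion in `M(L)`. -/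
instance : Inv (MonoHomeo L) :=
  ⟨fun f => ⟨f.1.symm, by
    rcases f.2 with hf | hf
    · exact Or.inl (symm_strictMono hf)
    · exact Or.inr (symm_strictAnti hf)⟩⟩

@[simp] theorem mul_apply (f g : MonoHomeo L) (x : L) : (f * g).1 x = f.1 (g.1 x) := rfl

@[simp] theorem inv_apply (f : MonoHomeo L) (x : L) : (f⁻¹).1 x = f.1.symm x := rfl

@[simp] theorem one_apply (x : L) : (1 : MonoHomeo L).1 x = x := rfl

/-- `M(L)` is a group under composition. -/
instance : Group (MonoHomeo L) where
  mul_assoc f g h := Subtype.ext (by ext x; rfl)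
  one_mul f := Subtype.ext (by ext x; rfl)
  mul_one f := Subtype.ext (by ext x; rfl)
  inv_mul_cancel f := Subtype.ext (by ext x; exact f.1.symm_apply_apply x)

end MonoHomeo

/-- For a GO-space `L`: if inversion is continuous on `M_p(L)`, then for every
`x ∈ L` isolated from at least one side and every `y ∈ L`, the set
`W(x;{y}) = {f ∈ M(L) : f x = y}` is open in `M_p(L)`. -/
theorem isOpen_of_continuous_inv
    {L : Type*} [LinearOrder L] [TopologicalSpace L]
    (GO_fine : ∀ s : Set L, IsOpen[Preorder.topology L] s → IsOpen s)
    (GO_basis : ∃ B : Set (Set L), (∀ s ∈ B, s.OrdConnected) ∧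
      TopologicalSpace.IsTopologicalBasis B)
    (hinv : Continuous fun f : MonoHomeo L => f⁻¹) :
    ∀ x : L, (𝓝[>] x = ⊥ ∨ 𝓝[<] x = ⊥) →
      ∀ y : L, IsOpen {f : MonoHomeo L | f.1 x = y} := by
  intro x hx y
  by_cases hL : ∃ a b : L, a < b
  · -- helper: order-topology opens are open in L
    have hIio : ∀ c : L, IsOpen (Iio c) := fun c =>
      GO_fine _ (TopologicalSpace.GenerateOpen.basic _ ⟨c, Or.inr rfl⟩)
    have hIoi : ∀ c : L, IsOpen (Ioi c) := fun c =>
      GO_fine _ (TopologicalSpace.GenerateOpen.basic _ ⟨c, Or.inl rfl⟩)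
    have heval : ∀ (V : Set L), IsOpen V → ∀ a : L,
        IsOpen {g : MonoHomeo L | g.1 a ∈ V} := by
      intro V hV a
      have hc : Continuous fun g : MonoHomeo L => ((g.1 : L ≃ₜ L) : L → L) :=
        continuous_induced_dom
      exact hV.preimage ((continuous_apply a).comp hc)
    obtain ⟨a, b, hab⟩ := hL
    obtain ⟨A, B, hAo, hBo, haA, hbB, hsep⟩ :
        ∃ A B : Set L, IsOpen A ∧ IsOpen B ∧ a ∈ A ∧ b ∈ B ∧ ∀ p ∈ A, ∀ q ∈ B, p < q := by
      by_cases hc : ∃ c, a < c ∧ c < b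
      · obtain ⟨c, h1, h2⟩ := hc
        exact ⟨Iio c, Ioi c, hIio c, hIoi c, h1, h2, fun p hp q hq => hp.trans hq⟩
      · refine ⟨Iio b, Ioi a, hIio b, hIoi a, hab, hab, fun p hp q hq => ?_⟩
        rcases le_or_gt p a with h | h
        · exact h.trans_lt hq
        · exact absurd ⟨p, h, hp⟩ hc
    obtain ⟨U, hUo, hxU, hUside⟩ : ∃ U : Set L, IsOpen U ∧ x ∈ U ∧
        ((∀ z ∈ U, z ≤ x) ∨ (∀ z ∈ U, x ≤ z)) := by
      rcases hx with h | h
      · have h0 : (∅ : Set L) ∈ 𝓝[>] x := by rw [h]; exact mem_bot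
        rw [mem_nhdsWithin] at h0
        obtain ⟨u, huo, hxu, hsub⟩ := h0
        exact ⟨u, huo, hxu, Or.inl fun z hz => not_lt.1 fun hlt => hsub ⟨hz, hlt⟩⟩
      · have h0 : (∅ : Set L) ∈ 𝓝[<] x := by rw [h]; exact mem_bot
        rw [mem_nhdsWithin] at h0
        obtain ⟨u, huo, hxu, hsub⟩ := h0
        exact ⟨u, huo, hxu, Or.inr fun z hz => not_lt.1 fun hlt => hsub ⟨hz, hlt⟩⟩
    rw [isOpen_iff_mem_nhds]
    intro f₀ hf₀
    have hf₀x : f₀.1 x = y := hf₀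
    set N : Set (MonoHomeo L) :=
      {g | g.1 x ∈ f₀.1 '' U} ∩ ({g | (g⁻¹).1 y ∈ U} ∩
        ({g | g.1 a ∈ f₀.1 '' A} ∩ {g | g.1 b ∈ f₀.1 '' B})) with hN
    have hNopen : IsOpen N := by
      refine ((heval _ (f₀.1.isOpenMap _ hUo) x).inter (IsOpen.inter ?_
        ((heval _ (f₀.1.isOpenMap _ hAo) a).inter (heval _ (f₀.1.isOpenMap _ hBo) b))))
      exact (heval _ hUo y).preimage hinv
    have hf₀N : f₀ ∈ N := by
      refine ⟨mem_image_of_mem _ hxU, ?_, mem_image_of_mem _ haA, mem_image_of_mem _ hbB⟩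
      show f₀.1.symm y ∈ U
      have hxy : f₀.1.symm y = x := by rw [← hf₀x, Homeomorph.symm_apply_apply]
      rw [hxy]; exact hxU
    refine mem_nhds_iff.mpr ⟨N, ?_, hNopen, hf₀N⟩
    rintro g ⟨h1, h2, h3, h4⟩
    set h : MonoHomeo L := f₀⁻¹ * g with hh
    have happ : ∀ z : L, h.1 z = f₀.1.symm (g.1 z) := fun z => rfl
    have hha : h.1 a ∈ A := by
      obtain ⟨p, hp, hfp⟩ := h3
      rw [happ, ← hfp, Homeomorph.symm_apply_apply]; exact hp
    have hhb : h.1 b ∈ B := by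
      obtain ⟨p, hp, hfp⟩ := h4
      rw [happ, ← hfp, Homeomorph.symm_apply_apply]; exact hp
    have hmono : StrictMono (h.1 : L → L) := by
      rcases h.2 with hm | hanti
      · exact hm
      · exact absurd (hsep _ hha _ hhb) (not_lt.2 (hanti hab).le)
    have hhx : h.1 x ∈ U := by
      obtain ⟨p, hp, hfp⟩ := h1
      rw [happ, ← hfp, Homeomorph.symm_apply_apply]; exact hp
    have hhinv : h.1.symm x ∈ U := by
      have key : h.1 (g.1.symm y) = x := by
        rw [happ, Homeomorph.apply_symm_apply, ← hf₀x, Homeomorph.symm_apply_apply]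
      have : h.1.symm x = g.1.symm y := by rw [← key, Homeomorph.symm_apply_apply]
      rw [this]; exact h2
    have hfix : h.1 x = x := by
      rcases hUside with hside | hside
      · refine le_antisymm (hside _ hhx) ?_
        have := hmono.monotone (hside _ hhinv)
        rwa [Homeomorph.apply_symm_apply] at this
      · refine le_antisymm ?_ (hside _ hhx)
        have := hmono.monotone (hside _ hhinv)
        rwa [Homeomorph.apply_symm_apply] at this
    show g.1 x = y
    have := hfix
    rw [happ] at this
    rw [← Homeomorph.apply_symm_apply f₀.1 (g.1 x), this, hf₀x]
  · have hall : ∀ p q : L, p = q := fun p q =>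
      le_antisymm (not_lt.1 fun hlt => hL ⟨q, p, hlt⟩) (not_lt.1 fun hlt => hL ⟨p, q, hlt⟩)
    have : {f : MonoHomeo L | f.1 x = y} = univ := eq_univ_of_forall fun f => hall _ _
    rw [this]; exact isOpen_univ
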